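/- Let A > 2 and let q_1, q_2, q_3 ∈ ℝ² form an equilateral triangle with all side lengths equal to 1, with positive masses m_1, m_2, m_3. Let H be the Hessian of f = M I/2 + U/(A−2) at this configuration, and for i < j let ṽ_{i,j} = v_{i,j}/(m_i m_j r_{i,j}) be the rescaled twist vectors. Then in the ordered basis (ṽ_{1,2}, ṽ_{1,3}, ṽ_{2,3}) the matrix of H is (3A/4) times the 3×3 matrix with rows (μ_{3,1} + μ_{3,2}, −1, −1), (−1, μ_{2,1} + μ_{2,3}, −1), (−1, −1, μ_{1,2} + μ_{1,3}), where μ_{i,j} = m_i/m_j; that is, ṽ_{i,j}ᵀ H ṽ_{i,j} = (3A/4)(μ_{k,i} + μ_{k,j}) for {i,j,k} = {1,2,3}, and ṽ_{i,j}ᵀ H ṽ_{i,k} = −3A/4 for distinct i, j, k. -/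

import Mathlib

noncomputable section

open Finset

/-- A point in the Euclidean plane with the given coordinates. -/
def pt (a b : ℝ) : EuclideanSpace ℝ (Fin 2) := (WithLp.equiv 2 (Fin 2 → ℝ)).symm ![a, b]

/-- The configuration space of `n` planar points, identified with `ℝ^{2n}`. -/
abbrev Conf (n : ℕ) := Fin n → EuclideanSpace ℝ (Fin 2)

/-- The twist vector `v_{i,j}`: its only nonzero components are
`(v_{i,j})_{x_i} = m_j (y_i - y_j)`, `(v_{i,j})_{y_i} = -m_j (x_i - x_j)`,
`(v_{i,j})_{x_j} = -m_i (y_i - y_j)`, `(v_{i,j})_{y_j} = m_i (x_i - x_j)`. -/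
def twist {n : ℕ} (m : Fin n → ℝ) (q : Conf n) (i j : Fin n) : Conf n :=
  fun k =>
    if k = i then pt (m j * (q i 1 - q j 1)) (-(m j * (q i 0 - q j 0)))
    else if k = j then pt (-(m i * (q i 1 - q j 1))) (m i * (q i 0 - q j 0))
    else 0

/-- The dot product on the configuration space `ℝ^{2n}`. -/
def dot {n : ℕ} (v w : Conf n) : ℝ := ∑ k, ∑ t, v k t * w k t

/-- Twice the signed area `Λ_{i,j,k}` of the triangle `q_i q_j q_k`. -/
def lam {n : ℕ} (q : Conf n) (i j k : Fin n) : ℝ :=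
  (q i 0 - q j 0) * (q i 1 - q k 1) - (q i 0 - q k 0) * (q i 1 - q j 1)

/-- The moment of inertia about the center of mass. -/
def Ifun {n : ℕ} (m : Fin n → ℝ) (q : Conf n) : ℝ :=
  ∑ i, m i * ‖q i - (∑ i, m i)⁻¹ • ∑ j, m j • q j‖ ^ 2

/-- The homogeneous potential `U = ∑_{i<j} m_i m_j r_{i,j}^{2-A}`. -/
def Ufun {n : ℕ} (A : ℝ) (m : Fin n → ℝ) (q : Conf n) : ℝ :=
  ∑ p ∈ Finset.univ.filter (fun p : Fin n × Fin n => p.1 < p.2),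
    m p.1 * m p.2 * ‖q p.1 - q p.2‖ ^ (2 - A)

/-- `f = M I / 2 + U / (A - 2)`. -/
def fFun {n : ℕ} (A : ℝ) (m : Fin n → ℝ) (q : Conf n) : ℝ :=
  (∑ i, m i) * Ifun m q / 2 + Ufun A m q / (A - 2)

/-- The Hessian of `f` at `q`, as a bilinear form: `v ᵀ H w`. -/
def hess {n : ℕ} (A : ℝ) (m : Fin n → ℝ) (q : Conf n) (v w : Conf n) : ℝ :=
  fderiv ℝ (fderiv ℝ (fFun A m)) q v w

/-!
By Lagrange's identity `M I = ∑_{a<b} m_a m_b r_{a,b}²`, so `f = ∑_{a<b} m_a m_b φ(r_{a,b}²)`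
with `φ(s) = s/2 + s^((2-A)/2)/(A-2)`. Since `φ'(1) = 0` and `φ''(1) = A/4`, at a configuration
whose mutual distances are all `1` the Hessian is
`H(v, w) = A ∑_{a<b} m_a m_b ⟪q_a - q_b, v_a - v_b⟫ ⟪q_a - q_b, w_a - w_b⟫`.
The twist `v_{i,j}` moves `q_i` and `q_j` perpendicularly to `q_i - q_j`, so the pair `(i, j)`
does not contribute, and each pair containing `k` contributes a multiple of the signed area
`Λ_{i,j,k}`, with `Λ_{i,j,k}² = 3/4` for the unit equilateral triangle.
-/

open Filter Topology RealInnerProductSpace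

section Hessian

variable {X E : Type*} [NormedAddCommGroup X] [NormedSpace ℝ X]
  [NormedAddCommGroup E] [NormedSpace ℝ E]

def HasHessianAt (f : X → ℝ) (H : X →L[ℝ] X →L[ℝ] ℝ) (x : X) : Prop :=
  (∀ᶠ y in 𝓝 x, DifferentiableAt ℝ f y) ∧ HasFDerivAt (fderiv ℝ f) H x

theorem HasHessianAt.fderiv_fderiv {f : X → ℝ} {H : X →L[ℝ] X →L[ℝ] ℝ} {x : X}
    (h : HasHessianAt f H x) : fderiv ℝ (fderiv ℝ f) x = H :=
  h.2.fderiv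

theorem HasHessianAt.const_mul {f : X → ℝ} {H : X →L[ℝ] X →L[ℝ] ℝ} {x : X}
    (h : HasHessianAt f H x) (c : ℝ) : HasHessianAt (fun y => c * f y) (c • H) x := by
  refine ⟨h.1.mono fun y hy => hy.const_mul c, (h.2.const_smul c).congr_of_eventuallyEq ?_⟩
  filter_upwards [h.1] with y hy using fderiv_const_mul hy c

theorem HasHessianAt.sum {ι : Type*} {s : Finset ι} {f : ι → X → ℝ}
    {H : ι → X →L[ℝ] X →L[ℝ] ℝ} {x : X} (h : ∀ i ∈ s, HasHessianAt (f i) (H i) x) :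
    HasHessianAt (fun y => ∑ i ∈ s, f i y) (∑ i ∈ s, H i) x := by
  have hd : ∀ᶠ y in 𝓝 x, ∀ i ∈ s, DifferentiableAt ℝ (f i) y :=
    (Filter.eventually_all_finset s).2 fun i hi => (h i hi).1
  refine ⟨hd.mono fun y hy => DifferentiableAt.fun_sum hy,
    (HasFDerivAt.fun_sum fun i hi => (h i hi).2).congr_of_eventuallyEq ?_⟩
  filter_upwards [hd] with y hy using fderiv_fun_sum hy

theorem HasHessianAt.comp_continuousLinearMap {g : E → ℝ} {H : E →L[ℝ] E →L[ℝ] ℝ} {x : X}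
    (L : X →L[ℝ] E) (h : HasHessianAt g H (L x)) :
    HasHessianAt (fun y => g (L y)) (H.bilinearComp L L) x := by
  have hd : ∀ᶠ y in 𝓝 x, DifferentiableAt ℝ g (L y) := L.continuous.continuousAt.eventually h.1
  refine ⟨hd.mono fun y hy => hy.comp y L.differentiableAt, ?_⟩
  have hH := (((ContinuousLinearMap.compL ℝ X E ℝ).flip L).hasFDerivAt).comp x
    (h.2.comp x L.hasFDerivAt)
  refine (hH.congr_fderiv ?_).congr_of_eventuallyEq ?_
  · ext v w; rfl
  · filter_upwards [hd] with y hy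
    exact fderiv_comp y hy L.differentiableAt |>.trans (by rw [L.fderiv]; rfl)

end Hessian

section InnerProductSpace

variable {F : Type*} [NormedAddCommGroup F] [InnerProductSpace ℝ F] {A : ℝ}

/-- `innerSL ℝ`, whose first argument is only `starRingEnd ℝ`-semilinear, retyped as bilinear. -/
def innerBilin : F →L[ℝ] F →L[ℝ] ℝ := innerSL ℝ

@[simp] theorem innerBilin_apply (u w : F) : innerBilin u w = ⟪u, w⟫ := rfl

theorem hasHessianAt_comp_norm_sq {φ φ' : ℝ → ℝ} {φ'' : ℝ} {x : F}
    (hφ : ∀ᶠ s in 𝓝 (‖x‖ ^ 2), HasDerivAt φ (φ' s) s) (hφ' : HasDerivAt φ' φ'' (‖x‖ ^ 2)) :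
    HasHessianAt (fun y => φ (‖y‖ ^ 2))
      ((2 * φ' (‖x‖ ^ 2)) • innerBilin + (4 * φ'') • (innerSL ℝ x).smulRight (innerSL ℝ x)) x := by
  have hD : ∀ᶠ y in 𝓝 x,
      HasFDerivAt (fun y => φ (‖y‖ ^ 2)) (φ' (‖y‖ ^ 2) • (2 • innerSL ℝ y)) y :=
    ((continuous_norm.pow 2).tendsto x |>.eventually hφ).mono fun y hy =>
      hy.comp_hasFDerivAt y (hasStrictFDerivAt_norm_sq y).hasFDerivAt
  refine ⟨hD.mono fun y hy => hy.differentiableAt, ?_⟩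
  have h2 := (hφ'.comp_hasFDerivAt x (hasStrictFDerivAt_norm_sq x).hasFDerivAt).smul
    (2 • innerBilin (F := F)).hasFDerivAt
  refine (h2.congr_fderiv ?_).congr_of_eventuallyEq (hD.mono fun y hy => hy.fderiv)
  ext u w
  simp only [Function.comp_apply, smul_apply, add_apply, ContinuousLinearMap.smulRight_apply,
    coe_innerSL_apply, nsmul_eq_mul, Nat.cast_ofNat, smul_eq_mul, innerBilin_apply]
  ring

theorem inner_sub_sub_comm (x y u v : F) : ⟪x - y, u - v⟫ = ⟪y - x, v - u⟫ := by
  rw [← neg_sub y x, ← neg_sub v u, inner_neg_neg]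

def radialPotential (A s : ℝ) : ℝ := s / 2 + s ^ ((2 - A) / 2) / (A - 2)

def pairHessian (A : ℝ) (x : F) : F →L[ℝ] F →L[ℝ] ℝ :=
  (1 - (‖x‖ ^ 2) ^ (-A / 2)) • innerBilin
    + (A * (‖x‖ ^ 2) ^ (-A / 2 - 1)) • (innerSL ℝ x).smulRight (innerSL ℝ x)

theorem hasDerivAt_radialPotential (hA : A ≠ 2) {s : ℝ} (hs : s ≠ 0) :
    HasDerivAt (radialPotential A) ((1 - s ^ (-A / 2)) / 2) s := by
  refine (((hasDerivAt_id s).div_const 2).add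
    ((Real.hasDerivAt_rpow_const (Or.inl hs)).div_const (A - 2))).congr_deriv ?_
  rw [show (2 - A) / 2 - 1 = -A / 2 by ring]
  field_simp [sub_ne_zero.mpr hA]
  ring

theorem hasDerivAt_radialPotential_deriv {s : ℝ} (hs : s ≠ 0) :
    HasDerivAt (fun s => (1 - s ^ (-A / 2)) / 2) (A / 4 * s ^ (-A / 2 - 1)) s := by
  refine (((Real.hasDerivAt_rpow_const (Or.inl hs)).const_sub 1).div_const 2).congr_deriv ?_
  ring

theorem hasHessianAt_radialPotential (hA : A ≠ 2) {x : F} (hx : x ≠ 0) :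
    HasHessianAt (fun y => radialPotential A (‖y‖ ^ 2)) (pairHessian A x) x := by
  have hx2 : ‖x‖ ^ 2 ≠ 0 := by positivity
  have hφ : ∀ᶠ s in 𝓝 (‖x‖ ^ 2), HasDerivAt (radialPotential A) ((1 - s ^ (-A / 2)) / 2) s :=
    (eventually_ne_nhds hx2).mono fun s hs => hasDerivAt_radialPotential hA hs
  convert hasHessianAt_comp_norm_sq hφ (hasDerivAt_radialPotential_deriv hx2) using 1
  simp only [pairHessian]
  congr 2 <;> ring

theorem pairHessian_apply_of_norm_eq_one {x : F} (hx : ‖x‖ = 1) (u w : F) :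
    pairHessian A x u w = A * ⟪x, u⟫ * ⟪x, w⟫ := by
  simp only [pairHessian, hx, one_pow, Real.one_rpow, sub_self, zero_smul, zero_add, add_apply,
    smul_apply, ContinuousLinearMap.smulRight_apply, coe_innerSL_apply, smul_eq_mul]
  ring

end InnerProductSpace

theorem sum_sum_eq_two_mul_sum_lt {ι : Type*} [Fintype ι] [LinearOrder ι] (F : ι → ι → ℝ)
    (hsymm : ∀ a b, F a b = F b a) (hdiag : ∀ a, F a a = 0) :
    ∑ a, ∑ b, F a b = 2 * ∑ p ∈ univ.filter (fun p : ι × ι => p.1 < p.2), F p.1 p.2 := by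
  have hsplit : ∀ a b, F a b = (if a < b then F a b else 0) + (if b < a then F b a else 0) := by
    intro a b
    rcases lt_trichotomy a b with h | rfl | h
    · simp [h, h.not_gt]
    · simp [hdiag]
    · simp [h, h.not_gt, hsymm a b]
  calc ∑ a, ∑ b, F a b
      = ∑ a, ∑ b, (if a < b then F a b else 0) + ∑ a, ∑ b, (if b < a then F b a else 0) := by
        simp only [← sum_add_distrib, ← hsplit]
    _ = 2 * ∑ a, ∑ b, (if a < b then F a b else 0) := by rw [sum_comm (s := univ) (t := univ)]; ring
    _ = _ := by rw [sum_filter, ← Finset.univ_product_univ, sum_product]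

def pairs (n : ℕ) : Finset (Fin n × Fin n) := univ.filter fun p => p.1 < p.2

section NBody

variable {n : ℕ} {A : ℝ} (m : Fin n → ℝ)

theorem mass_mul_Ifun (hM : ∑ i, m i ≠ 0) (q : Conf n) :
    (∑ i, m i) * Ifun m q = ∑ p ∈ pairs n, m p.1 * m p.2 * ‖q p.1 - q p.2‖ ^ 2 := by
  set M := ∑ i, m i
  set S := ∑ j, m j • q j
  have hS : ∀ x, ∑ i, m i * ⟪q i, x⟫ = ⟪S, x⟫ := fun x => by
    simp only [S, sum_inner, real_inner_smul_left]
  have hcenter : M * Ifun m q = M * ∑ i, m i * ‖q i‖ ^ 2 - ‖S‖ ^ 2 := by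
    have hexp : ∀ i, m i * ‖q i - M⁻¹ • S‖ ^ 2
        = m i * ‖q i‖ ^ 2 - 2 * M⁻¹ * (m i * ⟪q i, S⟫) + M⁻¹ ^ 2 * ‖S‖ ^ 2 * m i := fun i => by
      rw [norm_sub_sq_real, real_inner_smul_right, norm_smul, mul_pow, Real.norm_eq_abs, sq_abs]
      ring
    rw [Ifun, sum_congr rfl fun i _ => hexp i, sum_add_distrib, sum_sub_distrib, ← mul_sum,
      ← mul_sum, hS, real_inner_self_eq_norm_sq]
    field_simp
    ring
  have hdouble : ∑ a, ∑ b, m a * m b * ‖q a - q b‖ ^ 2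
      = 2 * (M * ∑ i, m i * ‖q i‖ ^ 2 - ‖S‖ ^ 2) := by
    have hcross : ∑ a, ∑ b, m a * m b * ⟪q a, q b⟫ = ‖S‖ ^ 2 := by
      rw [← real_inner_self_eq_norm_sq, ← hS]
      simp only [S, inner_sum, real_inner_smul_right, mul_sum, mul_assoc]
    have hsq : ∑ a, ∑ b, m a * m b * ‖q a - q b‖ ^ 2 = ∑ a, ∑ b, (m b * (m a * ‖q a‖ ^ 2)
        - 2 * (m a * m b * ⟪q a, q b⟫) + m a * (m b * ‖q b‖ ^ 2)) :=
      sum_congr rfl fun a _ => sum_congr rfl fun b _ => by rw [norm_sub_sq_real]; ring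
    rw [hsq]
    simp only [sum_add_distrib, sum_sub_distrib, ← mul_sum, ← sum_mul, hcross]
    ring
  have hhalf := sum_sum_eq_two_mul_sum_lt (fun a b => m a * m b * ‖q a - q b‖ ^ 2)
    (fun a b => by rw [norm_sub_rev]; ring) (fun a => by simp)
  rw [pairs]
  linarith

def relPos (a b : Fin n) : Conf n →L[ℝ] EuclideanSpace ℝ (Fin 2) :=
  ContinuousLinearMap.proj (R := ℝ) (φ := fun _ : Fin n => EuclideanSpace ℝ (Fin 2)) a
    - ContinuousLinearMap.proj b

@[simp] theorem relPos_apply (a b : Fin n) (v : Conf n) : relPos a b v = v a - v b := rfl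

theorem fFun_eq_sum_pairs (hM : ∑ i, m i ≠ 0) :
    fFun A m = fun q => ∑ p ∈ pairs n, m p.1 * m p.2 * radialPotential A (‖q p.1 - q p.2‖ ^ 2) := by
  have hpow : ∀ x : EuclideanSpace ℝ (Fin 2), (‖x‖ ^ 2) ^ ((2 - A) / 2) = ‖x‖ ^ (2 - A) := by
    intro x
    rw [← Real.rpow_natCast, ← Real.rpow_mul (norm_nonneg x)]
    ring_nf
  funext q
  rw [fFun, mass_mul_Ifun m hM, Ufun]
  simp only [radialPotential, hpow, mul_add, sum_add_distrib, ← mul_div_assoc, ← sum_div]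
  rfl

theorem hasHessianAt_fFun (hM : ∑ i, m i ≠ 0) (hA : A ≠ 2) {q : Conf n}
    (hq : ∀ a b, a ≠ b → q a ≠ q b) :
    HasHessianAt (fFun A m) (∑ p ∈ pairs n, (m p.1 * m p.2) •
      (pairHessian A (q p.1 - q p.2)).bilinearComp (relPos p.1 p.2) (relPos p.1 p.2)) q := by
  rw [fFun_eq_sum_pairs m hM]
  exact HasHessianAt.sum fun p hp =>
    ((hasHessianAt_radialPotential hA
      (sub_ne_zero.2 (hq _ _ (mem_filter.1 hp).2.ne))).comp_continuousLinearMap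
      (x := q) (relPos p.1 p.2)).const_mul _

theorem hess_eq_sum_pairs (hM : ∑ i, m i ≠ 0) (hA : A ≠ 2) {q : Conf n}
    (hq : ∀ a b, a ≠ b → q a ≠ q b) (v w : Conf n) :
    hess A m q v w = ∑ p ∈ pairs n,
      m p.1 * m p.2 * pairHessian A (q p.1 - q p.2) (v p.1 - v p.2) (w p.1 - w p.2) := by
  rw [hess, (hasHessianAt_fFun m hM hA hq).fderiv_fderiv]
  simp [_root_.sum_apply]

theorem hess_eq_of_unit_distances (hM : ∑ i, m i ≠ 0) (hA : A ≠ 2) {q : Conf n}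
    (hq : ∀ a b, a ≠ b → ‖q a - q b‖ = 1) (v w : Conf n) :
    hess A m q v w = A * ∑ p ∈ pairs n,
      m p.1 * m p.2 * (⟪q p.1 - q p.2, v p.1 - v p.2⟫ * ⟪q p.1 - q p.2, w p.1 - w p.2⟫) := by
  have hcoll : ∀ a b, a ≠ b → q a ≠ q b := fun a b hab h => by simpa [h] using hq a b hab
  rw [hess_eq_sum_pairs m hM hA hcoll, mul_sum]
  refine sum_congr rfl fun p hp => ?_
  rw [pairHessian_apply_of_norm_eq_one (hq _ _ (mem_filter.1 hp).2.ne)]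
  ring

theorem hess_smul_smul (q : Conf n) (c d : ℝ) (v w : Conf n) :
    hess A m q (c • v) (d • w) = c * d * hess A m q v w := by
  simp only [hess, map_smul, smul_apply, smul_eq_mul]
  ring

end NBody

section ThreeBody

variable {A : ℝ} (m : Fin 3 → ℝ) (q : Conf 3) {i j k : Fin 3}

theorem sum_pairs_fin_three (F : Fin 3 → Fin 3 → ℝ) (hF : ∀ a b, F a b = F b a)
    (hij : i ≠ j) (hik : i ≠ k) (hjk : j ≠ k) :
    ∑ p ∈ pairs 3, F p.1 p.2 = F i j + F i k + F j k := by
  rw [show pairs 3 = {(0, 1), (0, 2), (1, 2)} by decide, sum_insert (by decide),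
    sum_insert (by decide), sum_singleton]
  fin_cases i <;> fin_cases j <;> fin_cases k <;> (try simp at hij hik hjk ⊢) <;>
    linarith [hF 1 0, hF 2 0, hF 2 1]

theorem inner_eq_fin_two (x y : EuclideanSpace ℝ (Fin 2)) : ⟪x, y⟫ = x 0 * y 0 + x 1 * y 1 := by
  simp [PiLp.inner_apply, Fin.sum_univ_two, mul_comm]

@[simp] theorem pt_apply_zero (a b : ℝ) : pt a b 0 = a := rfl

@[simp] theorem pt_apply_one (a b : ℝ) : pt a b 1 = b := rfl

theorem inner_twist_left (x : EuclideanSpace ℝ (Fin 2)) :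
    ⟪x, twist m q i j i⟫ = m j * (x 0 * (q i 1 - q j 1) - x 1 * (q i 0 - q j 0)) := by
  simp only [twist, ↓reduceIte, inner_eq_fin_two, pt_apply_zero, pt_apply_one]
  ring

theorem inner_twist_right (hij : i ≠ j) (x : EuclideanSpace ℝ (Fin 2)) :
    ⟪x, twist m q i j j⟫ = -(m i * (x 0 * (q i 1 - q j 1) - x 1 * (q i 0 - q j 0))) := by
  simp only [twist, if_neg hij.symm, ↓reduceIte, inner_eq_fin_two, pt_apply_zero, pt_apply_one]
  ring

theorem twist_apply_of_ne (hki : k ≠ i) (hkj : k ≠ j) : twist m q i j k = 0 := by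
  simp only [twist, if_neg hki, if_neg hkj]

theorem inner_sub_twist_same (hij : i ≠ j) :
    ⟪q i - q j, twist m q i j i - twist m q i j j⟫ = 0 := by
  rw [inner_sub_right, inner_twist_left, inner_twist_right m q hij]
  simp only [PiLp.sub_apply]
  ring

theorem inner_sub_twist_left (hki : k ≠ i) (hkj : k ≠ j) :
    ⟪q i - q k, twist m q i j i - twist m q i j k⟫ = -(m j * lam q i j k) := by
  rw [twist_apply_of_ne m q hki hkj, sub_zero, inner_twist_left, lam]
  simp only [PiLp.sub_apply]
  ring

theorem inner_sub_twist_right (hij : i ≠ j) (hki : k ≠ i) (hkj : k ≠ j) :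
    ⟪q j - q k, twist m q i j j - twist m q i j k⟫ = m i * lam q i j k := by
  rw [twist_apply_of_ne m q hki hkj, sub_zero, inner_twist_right m q hij, lam]
  simp only [PiLp.sub_apply]
  ring

variable {q}

theorem hess_eq_of_unit_distances_fin_three (hM : ∑ i, m i ≠ 0) (hA : A ≠ 2)
    (hq : ∀ a b, a ≠ b → ‖q a - q b‖ = 1) (hij : i ≠ j) (hik : i ≠ k) (hjk : j ≠ k)
    (v w : Conf 3) :
    hess A m q v w = A * (m i * m j * (⟪q i - q j, v i - v j⟫ * ⟪q i - q j, w i - w j⟫)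
      + m i * m k * (⟪q i - q k, v i - v k⟫ * ⟪q i - q k, w i - w k⟫)
      + m j * m k * (⟪q j - q k, v j - v k⟫ * ⟪q j - q k, w j - w k⟫)) := by
  rw [hess_eq_of_unit_distances m hM hA hq, sum_pairs_fin_three
    (fun a b => m a * m b * (⟪q a - q b, v a - v b⟫ * ⟪q a - q b, w a - w b⟫))
    (fun a b => by rw [inner_sub_sub_comm (q a), inner_sub_sub_comm (q a) _ (w a)]; ring)
    hij hik hjk]

theorem hess_twist_self (hM : ∑ i, m i ≠ 0) (hA : A ≠ 2)
    (hq : ∀ a b, a ≠ b → ‖q a - q b‖ = 1) (hij : i ≠ j) (hik : i ≠ k) (hjk : j ≠ k) :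
    hess A m q (twist m q i j) (twist m q i j)
      = A * lam q i j k ^ 2 * m i * m j * m k * (m i + m j) := by
  rw [hess_eq_of_unit_distances_fin_three m hM hA hq hij hik hjk, inner_sub_twist_same m q hij,
    inner_sub_twist_left m q hik.symm hjk.symm, inner_sub_twist_right m q hij hik.symm hjk.symm]
  ring

theorem hess_twist_twist (hM : ∑ i, m i ≠ 0) (hA : A ≠ 2)
    (hq : ∀ a b, a ≠ b → ‖q a - q b‖ = 1) (hij : i ≠ j) (hik : i ≠ k) (hjk : j ≠ k) :
    hess A m q (twist m q i j) (twist m q i k) = -(A * lam q i j k ^ 2 * m i ^ 2 * m j * m k) := by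
  have hlam : lam q i k j = -lam q i j k := by simp only [lam]; ring
  rw [hess_eq_of_unit_distances_fin_three m hM hA hq hij hik hjk, inner_sub_twist_same m q hij,
    inner_sub_twist_same m q hik, inner_sub_twist_right m q hij hik.symm hjk.symm,
    inner_sub_sub_comm (q j), inner_sub_twist_right m q hik hij.symm hjk, hlam]
  ring

theorem lam_sq_of_unit_distances (hq : ∀ a b, a ≠ b → ‖q a - q b‖ = 1)
    (hij : i ≠ j) (hik : i ≠ k) (hjk : j ≠ k) : lam q i j k ^ 2 = 3 / 4 := by
  have hcoord : ∀ a b, a ≠ b → (q a 0 - q b 0) ^ 2 + (q a 1 - q b 1) ^ 2 = 1 := fun a b hab => by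
    have h := EuclideanSpace.real_norm_sq_eq (q a - q b)
    rw [hq a b hab, Fin.sum_univ_two] at h
    simpa using h.symm
  have h1 := hcoord i j hij
  have h2 := hcoord i k hik
  have h3 := hcoord j k hjk
  have hdot : (q i 0 - q j 0) * (q i 0 - q k 0) + (q i 1 - q j 1) * (q i 1 - q k 1) = 1 / 2 := by
    linear_combination (h1 + h2 - h3) / 2
  rw [lam]
  -- `Λ² = ‖q i - q j‖² ‖q i - q k‖² - ⟪q i - q j, q i - q k⟫²` in coordinates
  linear_combination ((q i 0 - q k 0) ^ 2 + (q i 1 - q k 1) ^ 2) * h1 + h2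
    - ((q i 0 - q j 0) * (q i 0 - q k 0) + (q i 1 - q j 1) * (q i 1 - q k 1) + 1 / 2) * hdot

end ThreeBody

/-- At the unit-side equilateral three-body configuration, the Hessian of
`f = M I/2 + U/(A-2)` in the rescaled twist vectors `ṽ_{i,j} = v_{i,j}/(m_i m_j r_{i,j})`
has entries `ṽ_{i,j}ᵀ H ṽ_{i,j} = (3A/4)(μ_{k,i} + μ_{k,j})` and
`ṽ_{i,j}ᵀ H ṽ_{i,k} = -3A/4` for distinct `i, j, k`, where `μ_{a,b} = m_a/m_b`;
i.e. in the ordered basis `(ṽ_{1,2}, ṽ_{1,3}, ṽ_{2,3})` the matrix of `H` is `3A/4`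
times `[[μ_{3,1}+μ_{3,2}, -1, -1], [-1, μ_{2,1}+μ_{2,3}, -1], [-1, -1, μ_{1,2}+μ_{1,3}]]`. -/
theorem equilateral_hessian_entries (A : ℝ) (hA : 2 < A)
    (m : Fin 3 → ℝ) (hm : ∀ i, 0 < m i) (q : Conf 3)
    (h01 : ‖q 0 - q 1‖ = 1) (h02 : ‖q 0 - q 2‖ = 1) (h12 : ‖q 1 - q 2‖ = 1) :
    ∀ i j k : Fin 3, i ≠ j → i ≠ k → j ≠ k →
      hess A m q ((m i * m j * ‖q i - q j‖)⁻¹ • twist m q i j)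
                 ((m i * m j * ‖q i - q j‖)⁻¹ • twist m q i j) =
        3 * A / 4 * (m k / m i + m k / m j) ∧
      hess A m q ((m i * m j * ‖q i - q j‖)⁻¹ • twist m q i j)
                 ((m i * m k * ‖q i - q k‖)⁻¹ • twist m q i k) =
        -(3 * A / 4) := by
  intro i j k hij hik hjk
  have hq : ∀ a b : Fin 3, a ≠ b → ‖q a - q b‖ = 1 := by
    intro a b hab
    fin_cases a <;> fin_cases b <;>
      first | exact absurd rfl hab | assumption | (rw [norm_sub_rev]; assumption)
  have hM : ∑ i, m i ≠ 0 := (sum_pos (fun i _ => hm i) univ_nonempty).ne'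
  have hmi := (hm i).ne'
  have hmj := (hm j).ne'
  have hmk := (hm k).ne'
  rw [hq i j hij, hq i k hik, hess_smul_smul, hess_smul_smul,
    hess_twist_self m hM hA.ne' hq hij hik hjk, hess_twist_twist m hM hA.ne' hq hij hik hjk,
    lam_sq_of_unit_distances hq hij hik hjk]
  constructor
  · field_simp
    ring
  · field_simp
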